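/- If α, β are increasing on [a,b], r₁, r₂ > 0, γ = r₁α + r₂β, and a bounded function f is RDS integrable with respect to γ, then f is RDS integrable with respect to α and with respect to β. -/

import Mathlib

open Set Filter Topology
open scoped Classical

noncomputable section

/-- A partition `a = x 0 < x 1 < ... < x n = b` of `[a,b]`. -/
structure RDSPartition (a b : ℝ) where
  n : ℕ
  x : ℕ → ℝ
  mono : ∀ i, i < n → x i < x (i + 1)
  first : x 0 = a
  last : x n = b

/-- Right limit `α(t+)`, with the convention `α(b+) = α(b)` at the right endpoint. -/
def rLim (b : ℝ) (α : ℝ → ℝ) (t : ℝ) : ℝ :=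
  if t < b then Function.rightLim α t else α t

/-- Left limit `α(t-)`, with the convention `α(a-) = α(a)` at the left endpoint. -/
def lLim (a : ℝ) (α : ℝ → ℝ) (t : ℝ) : ℝ :=
  if a < t then Function.leftLim α t else α t

/-- `α`-length of the singleton `{t}` inside `[a,b]`: `α(t+) - α(t-)`. -/
def muPt (a b : ℝ) (α : ℝ → ℝ) (t : ℝ) : ℝ :=
  rLim b α t - lLim a α t

/-- `α`-length of the open interval `(c,d)` inside `[a,b]`: `α(d-) - α(c+)`. -/
def muIoo (a b : ℝ) (α : ℝ → ℝ) (c d : ℝ) : ℝ :=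
  lLim a α d - rLim b α c

/-- `f` is a step function with respect to the partition `P`: it is constant on each
open subinterval `(x (i-1), x i)` of `P`. -/
def IsStepOn (a b : ℝ) (f : ℝ → ℝ) (P : RDSPartition a b) : Prop :=
  ∀ i, i < P.n → ∀ s ∈ Set.Ioo (P.x i) (P.x (i + 1)),
    f s = f ((P.x i + P.x (i + 1)) / 2)

/-- The RDS integral of a step function with respect to the partition `P`:
`Σ_{i=0}^n f(x_i) μ_α({x_i}) + Σ_{i=1}^n c_i μ_α(I_i)`. -/
def stepInt (a b : ℝ) (α : ℝ → ℝ) (P : RDSPartition a b) (f : ℝ → ℝ) : ℝ :=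
  (∑ i ∈ Finset.range (P.n + 1), f (P.x i) * muPt a b α (P.x i)) +
    ∑ i ∈ Finset.range P.n,
      f ((P.x i + P.x (i + 1)) / 2) * muIoo a b α (P.x i) (P.x (i + 1))

/-- Upper envelope: infimum of RDS step integrals of step functions above `f` on `[a,b]`. -/
def upperRDS (a b : ℝ) (α f : ℝ → ℝ) : ℝ :=
  sInf { r | ∃ (u : ℝ → ℝ) (P : RDSPartition a b), IsStepOn a b u P ∧
    (∀ t ∈ Set.Icc a b, f t ≤ u t) ∧ r = stepInt a b α P u }

/-- Lower envelope: supremum of RDS step integrals of step functions below `f` on `[a,b]`. -/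
def lowerRDS (a b : ℝ) (α f : ℝ → ℝ) : ℝ :=
  sSup { r | ∃ (v : ℝ → ℝ) (P : RDSPartition a b), IsStepOn a b v P ∧
    (∀ t ∈ Set.Icc a b, v t ≤ f t) ∧ r = stepInt a b α P v }

/-- RDS integrability with respect to an increasing integrator. -/
def RDSIntegrableInc (a b : ℝ) (α f : ℝ → ℝ) : Prop :=
  lowerRDS a b α f = upperRDS a b α f

/-- The RDS integral with respect to an increasing integrator. -/
def RDSIntegralInc (a b : ℝ) (α f : ℝ → ℝ) : ℝ := upperRDS a b α f

/-- RDS integrability with respect to a BV integrator: some Jordan decomposition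
into increasing functions works. -/
def RDSIntegrable (a b : ℝ) (α f : ℝ → ℝ) : Prop :=
  ∃ αp αm : ℝ → ℝ, MonotoneOn αp (Set.Icc a b) ∧ MonotoneOn αm (Set.Icc a b) ∧
    (∀ t ∈ Set.Icc a b, α t = αp t - αm t) ∧
    RDSIntegrableInc a b αp f ∧ RDSIntegrableInc a b αm f

/-- The RDS integral with respect to a BV integrator. -/
def RDSIntegral (a b : ℝ) (α f : ℝ → ℝ) : ℝ :=
  if h : RDSIntegrable a b α f then
    RDSIntegralInc a b h.choose f - RDSIntegralInc a b h.choose_spec.choose f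
  else 0

/-- `f` is bounded on `[a,b]`. -/
def BddOn (a b : ℝ) (f : ℝ → ℝ) : Prop :=
  ∃ M : ℝ, ∀ t ∈ Set.Icc a b, |f t| ≤ M

end

/-! Step integrals are linear in the integrator, and, being Lebesgue–Stieltjes integrals over
`[a,b]` of step functions, monotone in the integrand. Hence for step functions `v ≤ f ≤ u` the
`γ`-gap `S_γ u - S_γ v = r₁ (S_α u - S_α v) + r₂ (S_β u - S_β v)` dominates `r₁` times the
`α`-gap, and the arbitrarily small `γ`-gaps that integrability with respect to `γ` provides force
arbitrarily small `α`-gaps. -/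

open Function MeasureTheory

section OneSidedLimits

variable {X Y : Type*} [LinearOrder X] [TopologicalSpace X] [OrderTopology X]
  [TopologicalSpace Y] [T2Space Y] {f g : X → Y} {t : X}

lemma rightLim_congr (hfg : f =ᶠ[𝓝[>] t] g) (ht : f t = g t) :
    rightLim f t = rightLim g t := by
  rcases (𝓝[>] t).eq_or_neBot with hbot | _
  · rw [rightLim_eq_of_eq_bot f hbot, rightLim_eq_of_eq_bot g hbot, ht]
  by_cases hf : ∃ y, Tendsto f (𝓝[>] t) (𝓝 y)
  · obtain ⟨y, hy⟩ := hf
    rw [rightLim_eq_of_tendsto hy, rightLim_eq_of_tendsto (hy.congr' hfg)]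
  · have hg : ¬∃ y, Tendsto g (𝓝[>] t) (𝓝 y) := fun ⟨y, hy⟩ => hf ⟨y, hy.congr' hfg.symm⟩
    rw [rightLim_eq_of_not_tendsto f hf, rightLim_eq_of_not_tendsto g hg, ht]

lemma leftLim_congr (hfg : f =ᶠ[𝓝[<] t] g) (ht : f t = g t) :
    leftLim f t = leftLim g t :=
  rightLim_congr (X := Xᵒᵈ) hfg ht

end OneSidedLimits

section MonotoneLimits

variable {A B : ℝ → ℝ} (r₁ r₂ : ℝ)

lemma Monotone.rightLim_linear_comb (hA : Monotone A) (hB : Monotone B) (t : ℝ) :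
    rightLim (fun s => r₁ * A s + r₂ * B s) t = r₁ * rightLim A t + r₂ * rightLim B t :=
  rightLim_eq_of_tendsto
    (((hA.tendsto_rightLim t).const_mul r₁).add ((hB.tendsto_rightLim t).const_mul r₂))

lemma Monotone.leftLim_linear_comb (hA : Monotone A) (hB : Monotone B) (t : ℝ) :
    leftLim (fun s => r₁ * A s + r₂ * B s) t = r₁ * leftLim A t + r₂ * leftLim B t :=
  leftLim_eq_of_tendsto
    (((hA.tendsto_leftLim t).const_mul r₁).add ((hB.tendsto_leftLim t).const_mul r₂))

end MonotoneLimits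

section StieltjesMeasure

variable {g : ℝ → ℝ}

lemma Monotone.measureReal_stieltjesFunction_singleton (hg : Monotone g) (t : ℝ) :
    hg.stieltjesFunction.measure.real {t} = rightLim g t - leftLim g t := by
  rw [measureReal_def, StieltjesFunction.measure_singleton, funext hg.stieltjesFunction_eq,
    leftLim_rightLim (hg.tendsto_leftLim t),
    ENNReal.toReal_ofReal (sub_nonneg.2 (hg.leftLim_le_rightLim le_rfl))]

lemma Monotone.measureReal_stieltjesFunction_Ioo (hg : Monotone g) {c d : ℝ} (hcd : c < d) :
    hg.stieltjesFunction.measure.real (Ioo c d) = leftLim g d - rightLim g c := by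
  rw [measureReal_def, StieltjesFunction.measure_Ioo, funext hg.stieltjesFunction_eq,
    leftLim_rightLim (hg.tendsto_leftLim d),
    ENNReal.toReal_ofReal (sub_nonneg.2 (hg.rightLim_le_leftLim hcd))]

end StieltjesMeasure

namespace RDSPartition

variable {a b : ℝ} (P : RDSPartition a b)

lemma strictMonoOn_x : StrictMonoOn P.x (Iic P.n) :=
  strictMonoOn_Iic_of_lt_succ P.mono

lemma x_le_x {i j : ℕ} (hij : i ≤ j) (hj : j ≤ P.n) : P.x i ≤ P.x j :=
  P.strictMonoOn_x.monotoneOn (hij.trans hj : i ∈ Iic P.n) hj hij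

lemma x_mem_Icc {i : ℕ} (hi : i ≤ P.n) : P.x i ∈ Icc a b := by
  simpa only [mem_Icc, P.first, P.last] using
    And.intro (P.x_le_x (Nat.zero_le i) hi) (P.x_le_x hi le_rfl)

lemma left_le_right (P : RDSPartition a b) : a ≤ b :=
  (P.x_mem_Icc le_rfl).1.trans (P.x_mem_Icc le_rfl).2

def trivial (hab : a < b) : RDSPartition a b where
  n := 1
  x i := if i = 0 then a else b
  mono i hi := by simpa [Nat.lt_one_iff.mp hi] using hab
  first := if_pos rfl
  last := if_neg one_ne_zero

end RDSPartition

section StepIntegral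

variable {a b : ℝ} {u : ℝ → ℝ} {P : RDSPartition a b} (μ : Measure ℝ) [IsLocallyFiniteMeasure μ]

lemma IsStepOn.integrableOn_Ioc (hu : IsStepOn a b u P) {i : ℕ} (hi : i < P.n) :
    IntegrableOn u (Ioc (P.x i) (P.x (i + 1))) μ := by
  rw [← Ioo_union_right (P.mono i hi)]
  exact ((integrableOn_const measure_Ioo_lt_top.ne).congr_fun (EqOn.symm (hu i hi))
    measurableSet_Ioo).union (integrableOn_singleton (hx := measure_singleton_lt_top))

lemma IsStepOn.setIntegral_Ioc (hu : IsStepOn a b u P) {i : ℕ} (hi : i < P.n) :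
    ∫ t in Ioc (P.x i) (P.x (i + 1)), u t ∂μ =
      u ((P.x i + P.x (i + 1)) / 2) * μ.real (Ioo (P.x i) (P.x (i + 1))) +
        u (P.x (i + 1)) * μ.real {P.x (i + 1)} := by
  have hIoo := hu.integrableOn_Ioc μ hi
  rw [← Ioo_union_right (P.mono i hi)] at hIoo ⊢
  rw [setIntegral_union (by simp) (measurableSet_singleton _) hIoo.left_of_union
    hIoo.right_of_union, setIntegral_congr_fun measurableSet_Ioo (hu i hi),
    setIntegral_const, integral_singleton, smul_eq_mul, smul_eq_mul, mul_comm,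
    mul_comm (μ.real _)]

lemma IsStepOn.integrableOn_Icc_and_setIntegral_eq (hu : IsStepOn a b u P) {k : ℕ}
    (hk : k ≤ P.n) :
    IntegrableOn u (Icc (P.x 0) (P.x k)) μ ∧
      ∫ t in Icc (P.x 0) (P.x k), u t ∂μ =
        (∑ i ∈ Finset.range (k + 1), u (P.x i) * μ.real {P.x i}) +
          ∑ i ∈ Finset.range k,
            u ((P.x i + P.x (i + 1)) / 2) * μ.real (Ioo (P.x i) (P.x (i + 1))) := by
  induction k with
  | zero =>
    rw [Icc_self]
    refine ⟨integrableOn_singleton (hx := measure_singleton_lt_top), ?_⟩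
    simp only [integral_singleton, smul_eq_mul, mul_comm, zero_add, Finset.sum_range_one,
      Finset.range_zero, Finset.sum_empty, add_zero]
  | succ k ih =>
    have hk' : k < P.n := hk
    obtain ⟨hint, heq⟩ := ih hk'.le
    have hsplit : Icc (P.x 0) (P.x (k + 1)) = Icc (P.x 0) (P.x k) ∪ Ioc (P.x k) (P.x (k + 1)) :=
      (Icc_union_Ioc_eq_Icc (P.x_le_x (Nat.zero_le k) hk'.le) (P.mono k hk').le).symm
    have hdisj : Disjoint (Icc (P.x 0) (P.x k)) (Ioc (P.x k) (P.x (k + 1))) :=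
      (Iic_disjoint_Ioc le_rfl).mono_left Icc_subset_Iic_self
    rw [hsplit]
    refine ⟨hint.union (hu.integrableOn_Ioc μ hk'), ?_⟩
    rw [setIntegral_union hdisj measurableSet_Ioc hint (hu.integrableOn_Ioc μ hk'), heq,
      hu.setIntegral_Ioc μ hk']
    simp only [Finset.sum_range_succ]
    ring

lemma IsStepOn.integrableOn_Icc (hu : IsStepOn a b u P) : IntegrableOn u (Icc a b) μ := by
  simpa only [P.first, P.last] using (hu.integrableOn_Icc_and_setIntegral_eq μ le_rfl).1

lemma IsStepOn.setIntegral_Icc (hu : IsStepOn a b u P) :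
    ∫ t in Icc a b, u t ∂μ =
      (∑ i ∈ Finset.range (P.n + 1), u (P.x i) * μ.real {P.x i}) +
        ∑ i ∈ Finset.range P.n,
          u ((P.x i + P.x (i + 1)) / 2) * μ.real (Ioo (P.x i) (P.x (i + 1))) := by
  simpa only [P.first, P.last] using (hu.integrableOn_Icc_and_setIntegral_eq μ le_rfl).2

end StepIntegral

section Extension

variable {a b : ℝ} {α : ℝ → ℝ}

/-- Its one-sided limits on `[a,b]` reproduce `rLim b α` and `lLim a α`, endpoint conventions
included, so `muPt` and `muIoo` become masses of its Stieltjes measure. -/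
def clampExtend (a b : ℝ) (α : ℝ → ℝ) (t : ℝ) : ℝ :=
  α (max a (min t b))

lemma clampExtend_of_mem {t : ℝ} (ht : t ∈ Icc a b) : clampExtend a b α t = α t := by
  rw [clampExtend, min_eq_left ht.2, max_eq_right ht.1]

lemma monotone_clampExtend (hab : a ≤ b) (hα : MonotoneOn α (Icc a b)) :
    Monotone (clampExtend a b α) := fun _ _ hst =>
  hα ⟨le_max_left _ _, max_le hab (min_le_right _ _)⟩
    ⟨le_max_left _ _, max_le hab (min_le_right _ _)⟩
    (max_le_max le_rfl (min_le_min_right _ hst))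

lemma rLim_eq_rightLim_clampExtend {t : ℝ} (ht : t ∈ Icc a b) :
    rLim b α t = rightLim (clampExtend a b α) t := by
  rcases ht.2.lt_or_eq with htb | rfl
  · rw [rLim, if_pos htb, rightLim_congr _ (clampExtend_of_mem ht)]
    filter_upwards [Ioo_mem_nhdsGT htb] with s hs
    exact clampExtend_of_mem ⟨ht.1.trans hs.1.le, hs.2.le⟩
  · rw [rLim, if_neg (lt_irrefl t)]
    refine (rightLim_eq_of_tendsto <| tendsto_const_nhds.congr' ?_).symm
    filter_upwards [self_mem_nhdsWithin] with s (hs : t < s)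
    rw [clampExtend, min_eq_right hs.le, max_eq_right ht.1]

lemma lLim_eq_leftLim_clampExtend {t : ℝ} (ht : t ∈ Icc a b) :
    lLim a α t = leftLim (clampExtend a b α) t := by
  rcases ht.1.lt_or_eq with hat | rfl
  · rw [lLim, if_pos hat, leftLim_congr _ (clampExtend_of_mem ht)]
    filter_upwards [Ioo_mem_nhdsLT hat] with s hs
    exact clampExtend_of_mem ⟨hs.1.le, hs.2.le.trans ht.2⟩
  · rw [lLim, if_neg (lt_irrefl a)]
    refine (leftLim_eq_of_tendsto <| tendsto_const_nhds.congr' ?_).symm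
    filter_upwards [self_mem_nhdsWithin] with s (hs : s < a)
    rw [clampExtend, min_eq_left (hs.le.trans ht.2), max_eq_left hs.le]

lemma muPt_eq {t : ℝ} (ht : t ∈ Icc a b) :
    muPt a b α t = rightLim (clampExtend a b α) t - leftLim (clampExtend a b α) t := by
  rw [muPt, rLim_eq_rightLim_clampExtend ht, lLim_eq_leftLim_clampExtend ht]

lemma muIoo_eq {c d : ℝ} (hc : c ∈ Icc a b) (hd : d ∈ Icc a b) :
    muIoo a b α c d = leftLim (clampExtend a b α) d - rightLim (clampExtend a b α) c := by
  rw [muIoo, lLim_eq_leftLim_clampExtend hd, rLim_eq_rightLim_clampExtend hc]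

end Extension

section LinearCombination

variable {a b : ℝ} {α β : ℝ → ℝ} (r₁ r₂ : ℝ)

lemma clampExtend_linear_comb :
    clampExtend a b (fun s => r₁ * α s + r₂ * β s) =
      fun s => r₁ * clampExtend a b α s + r₂ * clampExtend a b β s :=
  rfl

lemma muPt_linear_comb (hα : MonotoneOn α (Icc a b)) (hβ : MonotoneOn β (Icc a b)) {t : ℝ}
    (ht : t ∈ Icc a b) :
    muPt a b (fun s => r₁ * α s + r₂ * β s) t = r₁ * muPt a b α t + r₂ * muPt a b β t := by
  have hA := monotone_clampExtend (ht.1.trans ht.2) hα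
  have hB := monotone_clampExtend (ht.1.trans ht.2) hβ
  rw [muPt_eq ht, muPt_eq ht, muPt_eq ht, clampExtend_linear_comb,
    hA.rightLim_linear_comb r₁ r₂ hB, hA.leftLim_linear_comb r₁ r₂ hB]
  ring

lemma muIoo_linear_comb (hα : MonotoneOn α (Icc a b)) (hβ : MonotoneOn β (Icc a b)) {c d : ℝ}
    (hc : c ∈ Icc a b) (hd : d ∈ Icc a b) :
    muIoo a b (fun s => r₁ * α s + r₂ * β s) c d =
      r₁ * muIoo a b α c d + r₂ * muIoo a b β c d := by
  have hA := monotone_clampExtend (hc.1.trans hc.2) hα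
  have hB := monotone_clampExtend (hc.1.trans hc.2) hβ
  rw [muIoo_eq hc hd, muIoo_eq hc hd, muIoo_eq hc hd, clampExtend_linear_comb,
    hA.rightLim_linear_comb r₁ r₂ hB, hA.leftLim_linear_comb r₁ r₂ hB]
  ring

lemma stepInt_linear_comb (hα : MonotoneOn α (Icc a b)) (hβ : MonotoneOn β (Icc a b))
    (P : RDSPartition a b) (w : ℝ → ℝ) :
    stepInt a b (fun s => r₁ * α s + r₂ * β s) P w =
      r₁ * stepInt a b α P w + r₂ * stepInt a b β P w := by
  have hpt : ∀ i ∈ Finset.range (P.n + 1),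
      w (P.x i) * muPt a b (fun s => r₁ * α s + r₂ * β s) (P.x i) =
        r₁ * (w (P.x i) * muPt a b α (P.x i)) + r₂ * (w (P.x i) * muPt a b β (P.x i)) := by
    intro i hi
    rw [muPt_linear_comb r₁ r₂ hα hβ (P.x_mem_Icc (Finset.mem_range_succ_iff.mp hi))]
    ring
  have hint : ∀ i ∈ Finset.range P.n,
      w ((P.x i + P.x (i + 1)) / 2) *
          muIoo a b (fun s => r₁ * α s + r₂ * β s) (P.x i) (P.x (i + 1)) =
        r₁ * (w ((P.x i + P.x (i + 1)) / 2) * muIoo a b α (P.x i) (P.x (i + 1))) +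
          r₂ * (w ((P.x i + P.x (i + 1)) / 2) * muIoo a b β (P.x i) (P.x (i + 1))) := by
    intro i hi
    have hi : i < P.n := Finset.mem_range.mp hi
    rw [muIoo_linear_comb r₁ r₂ hα hβ (P.x_mem_Icc hi.le) (P.x_mem_Icc hi)]
    ring
  simp only [stepInt, Finset.sum_congr rfl hpt, Finset.sum_congr rfl hint,
    Finset.sum_add_distrib, ← Finset.mul_sum]
  ring

end LinearCombination

section StepIntegralAsLebesgueStieltjes

variable {a b : ℝ} {α u v : ℝ → ℝ} {P Q : RDSPartition a b}

lemma IsStepOn.stepInt_eq_setIntegral (hu : IsStepOn a b u P) (hα : MonotoneOn α (Icc a b)) :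
    stepInt a b α P u =
      ∫ t in Icc a b, u t ∂(monotone_clampExtend P.left_le_right hα).stieltjesFunction.measure := by
  have hg := monotone_clampExtend P.left_le_right hα
  rw [hu.setIntegral_Icc hg.stieltjesFunction.measure, stepInt]
  congr 1
  · refine Finset.sum_congr rfl fun i hi => ?_
    rw [hg.measureReal_stieltjesFunction_singleton,
      muPt_eq (P.x_mem_Icc (Finset.mem_range_succ_iff.mp hi))]
  · refine Finset.sum_congr rfl fun i hi => ?_
    have hi : i < P.n := Finset.mem_range.mp hi
    rw [hg.measureReal_stieltjesFunction_Ioo (P.mono i hi),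
      muIoo_eq (P.x_mem_Icc hi.le) (P.x_mem_Icc hi)]

lemma stepInt_le_stepInt (hα : MonotoneOn α (Icc a b)) (hv : IsStepOn a b v Q)
    (hu : IsStepOn a b u P) (hvu : ∀ t ∈ Icc a b, v t ≤ u t) :
    stepInt a b α Q v ≤ stepInt a b α P u := by
  rw [hv.stepInt_eq_setIntegral hα, hu.stepInt_eq_setIntegral hα]
  exact setIntegral_mono_on (hv.integrableOn_Icc _) (hu.integrableOn_Icc _) measurableSet_Icc hvu

end StepIntegralAsLebesgueStieltjes

section Envelopes

variable {a b : ℝ} {α f : ℝ → ℝ}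

def upperStepInts (a b : ℝ) (α f : ℝ → ℝ) : Set ℝ :=
  { r | ∃ (u : ℝ → ℝ) (P : RDSPartition a b), IsStepOn a b u P ∧
    (∀ t ∈ Icc a b, f t ≤ u t) ∧ r = stepInt a b α P u }

def lowerStepInts (a b : ℝ) (α f : ℝ → ℝ) : Set ℝ :=
  { r | ∃ (v : ℝ → ℝ) (P : RDSPartition a b), IsStepOn a b v P ∧
    (∀ t ∈ Icc a b, v t ≤ f t) ∧ r = stepInt a b α P v }

lemma BddOn.upperStepInts_nonempty (hf : BddOn a b f) (hab : a < b) :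
    (upperStepInts a b α f).Nonempty :=
  let ⟨M, hM⟩ := hf
  ⟨_, fun _ => M, .trivial hab, fun _ _ _ _ => rfl, fun t ht => (abs_le.mp (hM t ht)).2, rfl⟩

lemma BddOn.lowerStepInts_nonempty (hf : BddOn a b f) (hab : a < b) :
    (lowerStepInts a b α f).Nonempty :=
  let ⟨M, hM⟩ := hf
  ⟨_, fun _ => -M, .trivial hab, fun _ _ _ _ => rfl, fun t ht => (abs_le.mp (hM t ht)).1, rfl⟩

lemma le_of_mem_lowerStepInts_of_mem_upperStepInts (hα : MonotoneOn α (Icc a b)) {r s : ℝ}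
    (hr : r ∈ lowerStepInts a b α f) (hs : s ∈ upperStepInts a b α f) : r ≤ s := by
  obtain ⟨v, Q, hv, hvf, rfl⟩ := hr
  obtain ⟨u, P, hu, hfu, rfl⟩ := hs
  exact stepInt_le_stepInt hα hv hu fun t ht => (hvf t ht).trans (hfu t ht)

lemma upperRDS_le (hα : MonotoneOn α (Icc a b)) (hf : BddOn a b f) (hab : a < b) {s : ℝ}
    (hs : s ∈ upperStepInts a b α f) : upperRDS a b α f ≤ s :=
  let ⟨_, hr⟩ := hf.lowerStepInts_nonempty hab
  csInf_le ⟨_, fun _ => le_of_mem_lowerStepInts_of_mem_upperStepInts hα hr⟩ hs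

lemma le_lowerRDS (hα : MonotoneOn α (Icc a b)) (hf : BddOn a b f) (hab : a < b) {r : ℝ}
    (hr : r ∈ lowerStepInts a b α f) : r ≤ lowerRDS a b α f :=
  let ⟨_, hs⟩ := hf.upperStepInts_nonempty hab
  le_csSup ⟨_, fun _ hr => le_of_mem_lowerStepInts_of_mem_upperStepInts hα hr hs⟩ hr

lemma lowerRDS_le_upperRDS (hα : MonotoneOn α (Icc a b)) (hf : BddOn a b f) (hab : a < b) :
    lowerRDS a b α f ≤ upperRDS a b α f :=
  csSup_le (hf.lowerStepInts_nonempty hab) fun _ hr =>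
    le_csInf (hf.upperStepInts_nonempty hab) fun _ hs =>
      le_of_mem_lowerStepInts_of_mem_upperStepInts hα hr hs

lemma RDSIntegrableInc.exists_sub_lt (h : RDSIntegrableInc a b α f) (hf : BddOn a b f)
    (hab : a < b) {ε : ℝ} (hε : 0 < ε) :
    ∃ s ∈ upperStepInts a b α f, ∃ r ∈ lowerStepInts a b α f, s - r < ε := by
  obtain ⟨s, hs, hs_lt⟩ := exists_lt_of_csInf_lt (hf.upperStepInts_nonempty hab)
    (lt_add_of_pos_right (upperRDS a b α f) (half_pos hε))
  obtain ⟨r, hr, hr_gt⟩ := exists_lt_of_lt_csSup (hf.lowerStepInts_nonempty hab)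
    (sub_lt_self (lowerRDS a b α f) (half_pos hε))
  unfold RDSIntegrableInc at h
  exact ⟨s, hs, r, hr, by linarith⟩

end Envelopes

lemma RDSIntegrableInc.of_linear_comb {a b r₁ r₂ : ℝ} {α β f : ℝ → ℝ} (hab : a < b)
    (hα : MonotoneOn α (Icc a b)) (hβ : MonotoneOn β (Icc a b)) (hr₁ : 0 < r₁) (hr₂ : 0 ≤ r₂)
    (hf : BddOn a b f) (h : RDSIntegrableInc a b (fun t => r₁ * α t + r₂ * β t) f) :
    RDSIntegrableInc a b α f := by
  refine le_antisymm (lowerRDS_le_upperRDS hα hf hab) (le_of_forall_pos_lt_add fun ε hε => ?_)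
  obtain ⟨_, ⟨u, P, hu, hfu, rfl⟩, _, ⟨v, Q, hv, hvf, rfl⟩, hgap⟩ :=
    h.exists_sub_lt hf hab (mul_pos hr₁ hε)
  have hβ_gap : stepInt a b β Q v ≤ stepInt a b β P u :=
    stepInt_le_stepInt hβ hv hu fun t ht => (hvf t ht).trans (hfu t ht)
  rw [stepInt_linear_comb r₁ r₂ hα hβ, stepInt_linear_comb r₁ r₂ hα hβ] at hgap
  have hα_gap : r₁ * (stepInt a b α P u - stepInt a b α Q v) < r₁ * ε := by
    linarith [mul_le_mul_of_nonneg_left hβ_gap hr₂]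
  calc upperRDS a b α f ≤ stepInt a b α P u := upperRDS_le hα hf hab ⟨u, P, hu, hfu, rfl⟩
    _ < stepInt a b α Q v + ε := by linarith [lt_of_mul_lt_mul_left hα_gap hr₁.le]
    _ ≤ lowerRDS a b α f + ε := by grw [le_lowerRDS hα hf hab ⟨v, Q, hv, hvf, rfl⟩]

theorem stmt6 (a b : ℝ) (hab : a < b) (α β : ℝ → ℝ)
    (hα : MonotoneOn α (Set.Icc a b)) (hβ : MonotoneOn β (Set.Icc a b))
    (r₁ r₂ : ℝ) (hr₁ : 0 < r₁) (hr₂ : 0 < r₂) (f : ℝ → ℝ) (hf : BddOn a b f)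
    (h : RDSIntegrableInc a b (fun t => r₁ * α t + r₂ * β t) f) :
    RDSIntegrableInc a b α f ∧ RDSIntegrableInc a b β f := by
  have h' : RDSIntegrableInc a b (fun t => r₂ * β t + r₁ * α t) f := by
    simpa only [add_comm] using h
  exact ⟨h.of_linear_comb hab hα hβ hr₁ hr₂.le hf, h'.of_linear_comb hab hβ hα hr₂ hr₁.le hf⟩
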